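/- arXiv:2109.04303 — 6 statements merged into one kernel-verified Lean document; each statement's English description precedes it below -/
import Mathlib

section
/- Let S be a commutative ring of characteristic p (i.e. p = 0 in S). If x ∈ W(S) (the ring of p-typical Witt vectors) satisfies frobenius x = 1, then x is a unit in W(S). -/
/-!
Since `S` has characteristic `p`, Frobenius raises every Witt coefficient to the `p`-th power, so
`frobenius x = 1` gives `x₀ ^ p = 1`. Multiplying by the Teichmüller lift of `x₀ ^ (p - 1)` yields
`y` with `y₀ = 1` and `frobenius y = 1`. Then `z = y - 1` is a Verschiebung `V w`, and the projection
formula `V w * z = V (w * frobenius z) = 0` shows `z ^ 2 = 0`, so `y = 1 + z` is a unit.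
-/

namespace WittVector

variable {p : ℕ} [Fact p.Prime] {R : Type*} [CommRing R]

theorem mul_self_eq_zero_of_coeff_zero_eq_zero_of_frobenius_eq_zero {z : WittVector p R}
    (h₀ : z.coeff 0 = 0) (hF : frobenius z = 0) : z * z = 0 := by
  have hV : verschiebung (z.shift 1) = z :=
    (eq_iterate_verschiebung (n := 1) fun i hi => by rwa [Nat.lt_one_iff.mp hi]).symm
  rw [← hV, ← verschiebung_mul_frobenius, hV, hF, mul_zero, map_zero]

theorem isUnit_of_frobenius_eq_one_of_coeff_zero_eq_one {y : WittVector p R}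
    (hF : frobenius y = 1) (h₀ : y.coeff 0 = 1) : IsUnit y := by
  have hsq : (y - 1) * (y - 1) = 0 := by
    refine mul_self_eq_zero_of_coeff_zero_eq_zero_of_frobenius_eq_zero ?_ ?_
    · rw [← constantCoeff_apply, map_sub, map_one, constantCoeff_apply, h₀, sub_self]
    · rw [map_sub, map_one, hF, sub_self]
  simpa only [sub_add_cancel] using (IsNilpotent.isUnit_add_one ⟨2, by rwa [sq]⟩ : IsUnit (y - 1 + 1))

theorem frobenius_teichmuller [CharP R p] (a : R) :
    frobenius (teichmuller p a) = teichmuller p (a ^ p) := by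
  ext (_ | n)
  · rw [coeff_frobenius_charP, teichmuller_coeff_zero, teichmuller_coeff_zero]
  · rw [coeff_frobenius_charP, teichmuller_coeff_pos _ _ _ n.succ_pos,
      teichmuller_coeff_pos _ _ _ n.succ_pos, zero_pow (Fact.out : p.Prime).ne_zero]

end WittVector

open WittVector

theorem frobenius_eq_one_isUnit (p : ℕ) [Fact p.Prime] (S : Type*) [CommRing S] [CharP S p]
    (x : WittVector p S) (hx : WittVector.frobenius x = 1) : IsUnit x := by
  have hp : 1 ≤ p := (Fact.out : p.Prime).one_le
  have hx₀ : x.coeff 0 ^ p = 1 := by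
    rw [← coeff_frobenius_charP, hx, one_coeff_zero]
  set t := teichmuller p (x.coeff 0 ^ (p - 1))
  have hF : frobenius (t * x) = 1 := by
    rw [map_mul, hx, mul_one, frobenius_teichmuller, ← pow_mul, mul_comm, pow_mul, hx₀, one_pow,
      map_one]
  have h₀ : (t * x).coeff 0 = 1 := by
    rw [mul_coeff_zero, teichmuller_coeff_zero, ← pow_succ, Nat.sub_add_cancel hp, hx₀]
  exact isUnit_of_mul_isUnit_right (isUnit_of_frobenius_eq_one_of_coeff_zero_eq_one hF h₀)
end

section
/- Let S be a commutative ring in which p^m = 0 for some natural number m. If x ∈ W(S) satisfies p·x = p in W(S), then x is a unit in W(S). -/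
/-!
Put `y = x - 1`, so `y * p = 0`; it suffices that `y` is nilpotent. Modulo `p` we have
`V F = p`, so `F ȳ = 0` and `y₀ ^ p ∈ p S`: the coefficient `y₀` is nilpotent, hence so is its
Teichmüller lift `t`. Write `y = t + V w`. Applying `F` to `(t + V w) * p = 0` gives
`w * p ^ 2 = -F (t * p)`, which is nilpotent, and the projection formula
`V a * V b = V (a * b * p)` yields `(V w) ^ (2k+1) = V (w ^ (k+1) * (w * p ^ 2) ^ k)`.
-/

namespace WittVector

variable {p : ℕ} [Fact p.Prime] {R : Type*} [CommRing R]

theorem verschiebung_pow_succ (w : WittVector p R) (n : ℕ) :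
    verschiebung w ^ (n + 1) = verschiebung (w ^ (n + 1) * (p : WittVector p R) ^ n) := by
  induction n with
  | zero => simp
  | succ n ih =>
    rw [pow_succ, ih, ← verschiebung_mul_frobenius, frobenius_verschiebung]
    ring_nf

theorem isNilpotent_verschiebung {w : WittVector p R}
    (h : IsNilpotent (w * (p : WittVector p R) ^ 2)) : IsNilpotent (verschiebung w) := by
  obtain ⟨k, hk⟩ := h
  refine ⟨2 * k + 1, ?_⟩
  have : w ^ (2 * k + 1) * (p : WittVector p R) ^ (2 * k) = w ^ (k + 1) * (w * p ^ 2) ^ k := by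
    ring
  rw [verschiebung_pow_succ, this, hk, mul_zero, map_zero]

theorem isNilpotent_teichmuller {r : R} (h : IsNilpotent r) :
    IsNilpotent (teichmuller p r) := by
  obtain ⟨k, hk⟩ := h
  exact ⟨k, by rw [← map_pow, hk, teichmuller_zero]⟩

theorem exists_verschiebung_eq_sub_teichmuller (x : WittVector p R) :
    ∃ w, verschiebung w = x - teichmuller p (x.coeff 0) := by
  have h0 : (x - teichmuller p (x.coeff 0)).coeff 0 = 0 := by
    simpa [teichmuller_coeff_zero] using map_sub constantCoeff x (teichmuller p (x.coeff 0))
  exact ⟨_, (eq_iterate_verschiebung (n := 1) (by simpa using h0)).symm⟩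

theorem coeff_zero_pow_eq_zero_of_mul_p_eq_zero (hp0 : (p : R) = 0) {y : WittVector p R}
    (hy : y * p = 0) : y.coeff 0 ^ p = 0 := by
  rcases subsingleton_or_nontrivial R with _ | _
  · exact Subsingleton.elim _ _
  have : CharP R p := (CharP.charP_iff_prime_eq_zero Fact.out).mpr hp0
  have hF : frobenius y = 0 :=
    verschiebung_injective p R (by rw [verschiebung_frobenius, hy, map_zero])
  rw [← coeff_frobenius_charP, hF, zero_coeff]

theorem isNilpotent_coeff_zero_of_mul_p_eq_zero (hpn : IsNilpotent (p : R))
    {y : WittVector p R} (hy : y * p = 0) : IsNilpotent (y.coeff 0) := by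
  set π := Ideal.Quotient.mk (Ideal.span {(p : R)})
  have h := coeff_zero_pow_eq_zero_of_mul_p_eq_zero (y := map π y)
    (Ideal.Quotient.eq_zero_iff_mem.mpr (Ideal.mem_span_singleton_self _))
    (by rw [← map_natCast (map π), ← map_mul, hy, map_zero])
  rw [map_coeff, ← map_pow, Ideal.Quotient.eq_zero_iff_mem, Ideal.mem_span_singleton'] at h
  obtain ⟨a, ha⟩ := h
  exact IsNilpotent.of_pow (ha ▸ (Commute.all a _).isNilpotent_mul_left hpn)

theorem isNilpotent_of_mul_p_eq_zero (hpn : IsNilpotent (p : R)) {y : WittVector p R}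
    (hy : y * p = 0) : IsNilpotent y := by
  obtain ⟨w, hw⟩ := exists_verschiebung_eq_sub_teichmuller y
  have ht : IsNilpotent (teichmuller p (y.coeff 0)) :=
    isNilpotent_teichmuller (isNilpotent_coeff_zero_of_mul_p_eq_zero hpn hy)
  generalize teichmuller p (y.coeff 0) = t at hw ht
  have hwp : w * (p : WittVector p R) ^ 2 = -frobenius (t * (p : WittVector p R)) :=
    calc w * (p : WittVector p R) ^ 2 = frobenius (verschiebung w * (p : WittVector p R)) := by
          rw [map_mul, frobenius_verschiebung, map_natCast]; ring
      _ = -frobenius (t * (p : WittVector p R)) := by rw [hw, sub_mul, hy, zero_sub, map_neg]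
  have hv : IsNilpotent (verschiebung w) := by
    refine isNilpotent_verschiebung ?_
    rw [hwp]
    exact (((Commute.all _ _).isNilpotent_mul_right ht).map frobenius).neg
  rw [show y = t + verschiebung w by rw [hw]; ring]
  exact (Commute.all _ _).isNilpotent_add ht hv

end WittVector

theorem isUnit_of_p_mul_eq_p_of_p_nilpotent (p m : ℕ) [Fact p.Prime] (S : Type*) [CommRing S]
    (hS : (p : S) ^ m = 0) (x : WittVector p S)
    (hx : (p : WittVector p S) * x = (p : WittVector p S)) : IsUnit x := by
  have hy : (x - 1) * p = 0 := by rw [sub_mul, mul_comm, hx, one_mul, sub_self]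
  simpa using (WittVector.isNilpotent_of_mul_p_eq_zero ⟨m, hS⟩ hy).isUnit_add_one
end

section
/- Let A be a commutative F_p-algebra with no idempotents other than 0 and 1, and let q = p^n with n ≥ 1. Suppose every element a ∈ A satisfies a^q = a. Then A is a finite field, and its cardinality is p^d for some d dividing n. -/
/-!
For `a ≠ 0` the element `a ^ (q - 1)` is idempotent and `a * a ^ (q - 1) = a`, so it is `1` and
`a` is a unit. A field all of whose elements are roots of `X ^ q - X` is finite, say of order
`p ^ d`; its cyclic unit group of order `p ^ d - 1` is killed by `q - 1 = p ^ n - 1`, and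
`gcd (p ^ d - 1) (p ^ n - 1) = p ^ gcd d n - 1` forces `d ∣ n`.
-/

open Polynomial

theorem Nat.dvd_of_pow_sub_one_dvd_pow_sub_one {a b c : ℕ} (ha : 2 ≤ a)
    (h : a ^ b - 1 ∣ a ^ c - 1) : b ∣ c := by
  have hpow : a ^ b - 1 = a ^ Nat.gcd b c - 1 := by
    rw [← Nat.pow_sub_one_gcd_pow_sub_one, Nat.gcd_eq_left h]
  have hb : b = Nat.gcd b c :=
    Nat.pow_right_injective ha (Nat.sub_one_cancel (by positivity) (by positivity) hpow)
  exact Nat.gcd_eq_left_iff_dvd.mp hb.symm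

theorem isField_of_forall_pow_eq_self {R : Type*} [CommRing R] [Nontrivial R]
    (hidem : ∀ e : R, IsIdempotentElem e → e = 0 ∨ e = 1) {q : ℕ} (hq : 2 ≤ q)
    (h : ∀ a : R, a ^ q = a) : IsField R := by
  obtain ⟨k, rfl⟩ := Nat.exists_eq_add_of_le' hq
  refine ⟨exists_pair_ne R, mul_comm, fun {a} ha => ⟨a ^ k, ?_⟩⟩
  have hfix : a * a ^ (k + 1) = a := by rw [← pow_succ', h]
  have hidem_pow : IsIdempotentElem (a ^ (k + 1)) := by
    calc a ^ (k + 1) * a ^ (k + 1) = a ^ k * a ^ (k + 2) := by ring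
      _ = a ^ (k + 1) := by rw [h, pow_succ]
  rcases hidem _ hidem_pow with h0 | h1
  · exact absurd (by rw [← hfix, h0, mul_zero]) ha
  · rwa [← pow_succ']

theorem finite_of_forall_pow_eq_self {K : Type*} [Field K] {q : ℕ} (hq : 1 < q)
    (h : ∀ a : K, a ^ q = a) : Finite K :=
  Set.finite_univ_iff.mp <|
    (finite_setOfPred_isRoot (FiniteField.X_pow_card_sub_X_ne_zero K hq)).subset fun a _ => by
      simp only [Set.mem_ofPred_eq, IsRoot, eval_sub, eval_pow, eval_X, h a, sub_self]

theorem FiniteField.card_sub_one_dvd_of_forall_pow_eq_self {K : Type*} [Field K] [Fintype K]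
    {m : ℕ} (h : ∀ a : K, a ^ m = a) : Fintype.card K - 1 ∣ m - 1 := by
  rcases m with _ | m
  · exact dvd_zero _
  refine (forall_pow_eq_one_iff K m).mp fun x => ?_
  have hx : x ^ m * x = x := by rw [← pow_succ]; exact Units.ext (by push_cast; exact h x)
  exact mul_eq_right.mp hx

theorem finite_field_of_pow_q_eq_self (p n : ℕ) [Fact p.Prime] (hn : 1 ≤ n)
    (A : Type*) [CommRing A] [CharP A p]
    (hidem : ∀ e : A, e * e = e → e = 0 ∨ e = 1)
    (hq : ∀ a : A, a ^ (p ^ n) = a) :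
    IsField A ∧ Finite A ∧ ∃ d : ℕ, d ∣ n ∧ Nat.card A = p ^ d := by
  have hp : p.Prime := Fact.out
  have : Nontrivial A := CharP.nontrivial_of_char_ne_one hp.ne_one
  have hq2 : 2 ≤ p ^ n := Nat.one_lt_pow (by omega) hp.one_lt
  have hA : IsField A := isField_of_forall_pow_eq_self hidem hq2 hq
  let := hA.toField
  have hfin : Finite A := finite_of_forall_pow_eq_self hq2 hq
  have := Fintype.ofFinite A
  obtain ⟨d, -, hcard⟩ := FiniteField.card A p
  refine ⟨hA, hfin, d, ?_, by rw [Nat.card_eq_fintype_card, hcard]⟩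
  exact Nat.dvd_of_pow_sub_one_dvd_pow_sub_one hp.two_le
    (hcard ▸ FiniteField.card_sub_one_dvd_of_forall_pow_eq_self hq)
end

section
/- Let B be a commutative F_p-algebra with no idempotents other than 0 and 1, and let f ∈ B[X] be a nonzero polynomial satisfying f(X + Y) = f(X) + f(Y) in B[X,Y], f(X·Y) = f(X)·f(Y) in B[X,Y], and f(1) = 1. Then f = X^{p^n} for some natural number n. -/
lemma aux_aeval_comp {B : Type*} [CommRing B] (f : Polynomial B)
    (x : Polynomial (Polynomial B)) :
    Polynomial.aeval x f = (f.map Polynomial.C).comp x := by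
  rw [Polynomial.comp, Polynomial.eval₂_map, Polynomial.aeval_def,
    IsScalarTower.algebraMap_eq B (Polynomial B) (Polynomial (Polynomial B)),
    Polynomial.algebraMap_eq, Polynomial.algebraMap_eq]

lemma aux_monomial {B : Type*} [CommRing B]
    (hidem : ∀ e : B, e * e = e → e = 0 ∨ e = 1)
    (f : Polynomial B) (hf : f ≠ 0)
    (hmul : Polynomial.aeval ((MvPolynomial.X 0 * MvPolynomial.X 1 : MvPolynomial (Fin 2) B)) f =
      Polynomial.aeval (MvPolynomial.X 0 : MvPolynomial (Fin 2) B) f *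
      Polynomial.aeval (MvPolynomial.X 1 : MvPolynomial (Fin 2) B) f) :
    ∃ k : ℕ, f = Polynomial.X ^ k := by
  classical
  set ψ : MvPolynomial (Fin 2) B →ₐ[B] Polynomial (Polynomial B) :=
    MvPolynomial.aeval ![Polynomial.C Polynomial.X, Polynomial.X] with hψ
  have E := congrArg ψ hmul
  simp only [map_mul, ← Polynomial.aeval_algHom_apply, hψ, MvPolynomial.aeval_X,
    Matrix.cons_val_zero, Matrix.cons_val_one, Matrix.head_cons] at E
  rw [aux_aeval_comp, aux_aeval_comp, aux_aeval_comp, Polynomial.comp_X, Polynomial.comp_C] at E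
  have geval : (f.map (Polynomial.C : B →+* Polynomial B)).eval Polynomial.X = f := by
    rw [Polynomial.eval_map, Polynomial.eval₂_C_X]
  rw [geval] at E
  have hcoeff : ∀ j : ℕ, Polynomial.C (f.coeff j) * Polynomial.X ^ j
      = f * Polynomial.C (f.coeff j) := by
    intro j
    have h1 : ((f.map (Polynomial.C : B →+* Polynomial B)).comp
        (Polynomial.C Polynomial.X * Polynomial.X)).coeff j
        = Polynomial.C (f.coeff j) * Polynomial.X ^ j := by
      rw [Polynomial.comp, Polynomial.eval₂_eq_sum, Polynomial.sum_def,
        Polynomial.finset_sum_coeff]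
      have hterm : ∀ k ∈ (f.map (Polynomial.C : B →+* Polynomial B)).support,
          (Polynomial.C ((f.map (Polynomial.C : B →+* Polynomial B)).coeff k) *
            (Polynomial.C Polynomial.X * Polynomial.X) ^ k).coeff j
          = if j = k then Polynomial.C (f.coeff k) * Polynomial.X ^ k else 0 := by
        intro k _
        rw [mul_pow, ← Polynomial.C_pow, ← mul_assoc, ← Polynomial.C_mul,
          Polynomial.coeff_C_mul, Polynomial.coeff_X_pow, Polynomial.coeff_map]
        split_ifs <;> simp
      rw [Finset.sum_congr rfl hterm, Finset.sum_ite_eq]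
      by_cases hj : j ∈ (f.map (Polynomial.C : B →+* Polynomial B)).support
      · simp [hj]
      · have : f.coeff j = 0 := by
          have := Polynomial.notMem_support_iff.mp hj
          rwa [Polynomial.coeff_map, map_eq_zero_iff _ Polynomial.C_injective] at this
        simp [hj, this]
    have h2 : (Polynomial.C f * f.map (Polynomial.C : B →+* Polynomial B)).coeff j
        = f * Polynomial.C (f.coeff j) := by
      rw [Polynomial.coeff_C_mul, Polynomial.coeff_map]
    rw [← h1, ← h2, E]
  have hex : ∃ k, f.coeff k ≠ 0 := by
    by_contra h
    push_neg at h
    exact hf (Polynomial.ext fun n => by simp [h n])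
  obtain ⟨k, hk⟩ := hex
  have hid : f.coeff k * f.coeff k = f.coeff k := by
    have h := congrArg (fun q => Polynomial.coeff q k) (hcoeff k)
    simp only [Polynomial.coeff_C_mul, Polynomial.coeff_X_pow, eq_self_iff_true, if_true, mul_one,
      Polynomial.coeff_mul_C] at h
    exact h.symm
  have hone : f.coeff k = 1 := (hidem _ hid).resolve_left hk
  refine ⟨k, ?_⟩
  have := hcoeff k
  rw [hone] at this
  simpa using this.symm

lemma aux_pow_of_add {p : ℕ} [hp : Fact p.Prime] {B : Type*} [CommRing B] [CharP B p]
    [Nontrivial B] (k : ℕ)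
    (hA : (Polynomial.X + 1 : Polynomial B) ^ k = Polynomial.X ^ k + 1) :
    ∃ n : ℕ, k = p ^ n := by
  haveI : CharP (Polynomial B) p :=
    charP_of_injective_ringHom (Polynomial.C_injective (R := B)) p
  have hk0 : k ≠ 0 := by
    rintro rfl
    simp only [pow_zero] at hA
    exact one_ne_zero (left_eq_add.mp hA)
  set n := k.factorization p with hn
  set q := p ^ n with hq
  set m := k / q with hm
  have hqm : q * m = k := Nat.ordProj_mul_ordCompl_eq_self k p
  have hpm : ¬ p ∣ m := Nat.not_dvd_ordCompl hp.out hk0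
  have hm0 : m ≠ 0 := (Nat.ordCompl_pos p hk0).ne'
  have hq0 : 0 < q := pow_pos hp.out.pos n
  have hm1 : m = 1 := by
    by_contra hne
    have hm2 : 2 ≤ m := (Nat.two_le_iff m).mpr ⟨hm0, hne⟩
    have hEq : ((Polynomial.X : Polynomial B) ^ q + 1) ^ m = Polynomial.X ^ (q * m) + 1 := by
      calc ((Polynomial.X : Polynomial B) ^ q + 1) ^ m
          = ((Polynomial.X + 1 : Polynomial B) ^ q) ^ m := by rw [add_pow_char_pow, one_pow]
        _ = (Polynomial.X + 1 : Polynomial B) ^ k := by rw [← pow_mul, hqm]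
        _ = Polynomial.X ^ k + 1 := hA
        _ = Polynomial.X ^ (q * m) + 1 := by rw [hqm]
    have hL : (((Polynomial.X : Polynomial B) ^ q + 1) ^ m).coeff q = (m : B) := by
      rw [add_pow, Polynomial.finset_sum_coeff]
      rw [Finset.sum_eq_single 1]
      · simp only [pow_one, one_pow, mul_one, Nat.choose_one_right]
        rw [mul_comm, ← Polynomial.C_eq_natCast, Polynomial.coeff_C_mul,
          Polynomial.coeff_X_pow, if_pos rfl, mul_one]
      · intro i hi hi1
        rw [one_pow, mul_one, ← pow_mul, ← Polynomial.C_eq_natCast, mul_comm,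
          Polynomial.coeff_C_mul, Polynomial.coeff_X_pow, if_neg, mul_zero]
        intro hcon
        exact hi1 (Nat.eq_of_mul_eq_mul_left hq0 (by omega)).symm
      · intro hmem
        exact absurd (Finset.mem_range.mpr (by omega)) hmem
    have hR : ((Polynomial.X : Polynomial B) ^ (q * m) + 1).coeff q = 0 := by
      have h1 : q ≠ q * m := by nlinarith
      rw [Polynomial.coeff_add, Polynomial.coeff_X_pow, Polynomial.coeff_one,
        if_neg h1, if_neg hq0.ne', add_zero]
    have : (m : B) = 0 := by rw [← hL, hEq, hR]
    exact hpm ((CharP.cast_eq_zero_iff B p m).mp this)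
  exact ⟨n, by rw [← hqm, hm1, mul_one]⟩

theorem ring_scheme_endo_of_affine_line_is_frobenius_power (p : ℕ) [Fact p.Prime]
    (B : Type*) [CommRing B] [CharP B p]
    (hidem : ∀ e : B, e * e = e → e = 0 ∨ e = 1)
    (f : Polynomial B) (hf : f ≠ 0)
    (hadd : Polynomial.aeval ((MvPolynomial.X 0 + MvPolynomial.X 1 : MvPolynomial (Fin 2) B)) f =
      Polynomial.aeval (MvPolynomial.X 0 : MvPolynomial (Fin 2) B) f +
      Polynomial.aeval (MvPolynomial.X 1 : MvPolynomial (Fin 2) B) f)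
    (hmul : Polynomial.aeval ((MvPolynomial.X 0 * MvPolynomial.X 1 : MvPolynomial (Fin 2) B)) f =
      Polynomial.aeval (MvPolynomial.X 0 : MvPolynomial (Fin 2) B) f *
      Polynomial.aeval (MvPolynomial.X 1 : MvPolynomial (Fin 2) B) f)
    (hone : Polynomial.eval (1 : B) f = 1) :
    ∃ n : ℕ, f = Polynomial.X ^ (p ^ n) := by
  classical
  rcases subsingleton_or_nontrivial B with hB | hB
  · exact absurd (Subsingleton.elim f 0) hf
  obtain ⟨k, hfk⟩ := aux_monomial hidem f hf hmul
  set φ : MvPolynomial (Fin 2) B →ₐ[B] Polynomial B :=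
    MvPolynomial.aeval ![Polynomial.X, 1] with hφ
  have hA := congrArg φ hadd
  simp only [map_add, ← Polynomial.aeval_algHom_apply, hφ, MvPolynomial.aeval_X,
    Matrix.cons_val_zero, Matrix.cons_val_one, Matrix.head_cons] at hA
  rw [hfk] at hA
  simp only [map_pow, Polynomial.aeval_X, Polynomial.aeval_one, one_pow] at hA
  obtain ⟨n, hn⟩ := aux_pow_of_add (p := p) k hA
  exact ⟨n, by rw [hfk, hn]⟩
end

section
/- Let R be a commutative ring, M an R-module, and d : M → R an R-linear map satisfying d(x)·y = d(y)·x for all x, y ∈ M (a quasi-ideal). Define on the set M × R the componentwise addition and the multiplication (m₁, r₁)·(m₂, r₂) = (r₂·m₁ + r₁·m₂ + d(m₁)·m₂, r₁·r₂). Then M × R is a commutative ring with unit (0, 1), and both maps s(m, r) = r and t(m, r) = r + d(m) are ring homomorphisms from M × R to R. -/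
set_option maxRecDepth 4000


/-- The multiplication attached to a quasi-ideal `d : M → R`:
`(m₁, r₁)·(m₂, r₂) = (r₂·m₁ + r₁·m₂ + d(m₁)·m₂, r₁·r₂)`. -/
def quasiIdealMul {R M : Type*} [CommRing R] [AddCommGroup M] [Module R M]
    (d : M →ₗ[R] R) (a b : M × R) : M × R :=
  (b.2 • a.1 + a.2 • b.1 + d a.1 • b.1, a.2 * b.2)

theorem quasiIdeal_ring_structure (R M : Type*) [CommRing R] [AddCommGroup M] [Module R M]
    (d : M →ₗ[R] R) (hd : ∀ x y : M, d x • y = d y • x) :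
    -- commutativity
    (∀ a b : M × R, quasiIdealMul d a b = quasiIdealMul d b a) ∧
    -- associativity
    (∀ a b c : M × R,
      quasiIdealMul d (quasiIdealMul d a b) c = quasiIdealMul d a (quasiIdealMul d b c)) ∧
    -- distributivity over the componentwise addition
    (∀ a b c : M × R,
      quasiIdealMul d a (b + c) = quasiIdealMul d a b + quasiIdealMul d a c) ∧
    -- (0, 1) is a two-sided unit
    (∀ a : M × R, quasiIdealMul d a ((0 : M), (1 : R)) = a) ∧
    (∀ a : M × R, quasiIdealMul d ((0 : M), (1 : R)) a = a) ∧
    -- s(m, r) = r is a ring homomorphism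
    (∀ a b : M × R, (quasiIdealMul d a b).2 = a.2 * b.2) ∧
    (∀ a b : M × R, (a + b).2 = a.2 + b.2) ∧
    (((0 : M), (1 : R)).2 = (1 : R)) ∧
    -- t(m, r) = r + d(m) is a ring homomorphism
    (∀ a b : M × R, (quasiIdealMul d a b).2 + d (quasiIdealMul d a b).1 =
      (a.2 + d a.1) * (b.2 + d b.1)) ∧
    (∀ a b : M × R, (a + b).2 + d (a + b).1 = (a.2 + d a.1) + (b.2 + d b.1)) ∧
    (((0 : M), (1 : R)).2 + d ((0 : M), (1 : R)).1 = (1 : R)) := by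
  have hd' : ∀ x y : M, d x * d y = d y * d x := fun x y => by ring
  refine ⟨?_, ?_, ?_, ?_, ?_, fun a b => rfl, fun a b => rfl, rfl, ?_, ?_, by simp⟩
  · intro a b
    simp only [quasiIdealMul, Prod.mk.injEq]
    constructor
    · rw [hd a.1 b.1]; abel
    · ring
  · intro a b c
    simp only [quasiIdealMul, Prod.mk.injEq, map_add, map_smul, smul_add, smul_smul,
      add_smul, smul_eq_mul]
    constructor
    · ring_nf
      abel
    · ring
  · intro a b c
    simp only [quasiIdealMul, Prod.add_def, Prod.mk.injEq, smul_add, add_smul, mul_add]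
    constructor
    · abel
    · trivial
  · intro a
    simp [quasiIdealMul]
  · intro a
    simp [quasiIdealMul]
  · intro a b
    simp only [quasiIdealMul, map_add, map_smul, smul_eq_mul]
    ring
  · intro a b
    simp [Prod.add_def]; ring
end

section
/- Let R be a commutative ring, M an R-module, and d : M → R a quasi-ideal (R-linear with d(x)·y = d(y)·x). Let (M × R, ·) be the commutative ring of the previous construction. Then the map c : (M × R) ×_{t,s} (M × R) → M × R, defined on pairs with t(m,r) = s(m',r') (i.e. r' = r + d(m)) by ((m, r), (m', r')) ↦ (m + m', r), is a ring homomorphism, where the fiber product carries the componentwise ring structure. -/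
/-- The groupoid composition `c((m, r), (m', r')) = (m + m', r)` attached to a quasi-ideal. -/
def quasiIdealComp {R M : Type*} [CommRing R] [AddCommGroup M] [Module R M]
    (a b : M × R) : M × R :=
  (a.1 + b.1, a.2)

section QuasiIdealComp

variable {R M : Type*} [CommRing R] [AddCommGroup M] [Module R M]

theorem quasiIdealComp_add (a a' b b' : M × R) :
    quasiIdealComp (R := R) (a + b) (a' + b') =
      quasiIdealComp (R := R) a a' + quasiIdealComp (R := R) b b' :=
  Prod.ext (add_add_add_comm _ _ _ _) rfl

theorem quasiIdealComp_mul {d : M →ₗ[R] R} (hd : ∀ x y : M, d x • y = d y • x)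
    {a a' b b' : M × R} (ha : a'.2 = a.2 + d a.1) (hb : b'.2 = b.2 + d b.1) :
    quasiIdealComp (R := R) (quasiIdealMul d a b) (quasiIdealMul d a' b') =
      quasiIdealMul d (quasiIdealComp (R := R) a a') (quasiIdealComp (R := R) b b') := by
  refine Prod.ext ?_ rfl
  simp only [quasiIdealComp, quasiIdealMul, ha, hb, map_add, add_smul, smul_add]
  -- the cross terms `d(b.1) • a'.1` and `d(a'.1) • b.1` are matched by the quasi-ideal symmetry
  rw [hd b.1 a'.1]
  abel

theorem quasiIdealComp_one :
    quasiIdealComp (R := R) ((0 : M), (1 : R)) ((0 : M), (1 : R)) = ((0 : M), (1 : R)) :=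
  Prod.ext (add_zero 0) rfl

end QuasiIdealComp

theorem quasiIdeal_comp_is_ring_hom (R M : Type*) [CommRing R] [AddCommGroup M] [Module R M]
    (d : M →ₗ[R] R) (hd : ∀ x y : M, d x • y = d y • x) :
    -- additivity on composable pairs
    (∀ a a' b b' : M × R, a'.2 = a.2 + d a.1 → b'.2 = b.2 + d b.1 →
      quasiIdealComp (R := R) (a + b) (a' + b') =
        quasiIdealComp (R := R) a a' + quasiIdealComp (R := R) b b') ∧
    -- multiplicativity on composable pairs
    (∀ a a' b b' : M × R, a'.2 = a.2 + d a.1 → b'.2 = b.2 + d b.1 →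
      quasiIdealComp (R := R) (quasiIdealMul d a b) (quasiIdealMul d a' b') =
        quasiIdealMul d (quasiIdealComp (R := R) a a') (quasiIdealComp (R := R) b b')) ∧
    -- the unit is preserved
    quasiIdealComp (R := R) ((0 : M), (1 : R)) ((0 : M), (1 : R)) = ((0 : M), (1 : R)) :=
  ⟨fun _ _ _ _ _ _ => quasiIdealComp_add _ _ _ _, fun _ _ _ _ ha hb => quasiIdealComp_mul hd ha hb,
    quasiIdealComp_one⟩
end
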